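/- Let f, g ∈ K[[x_1,...,x_n]], let s = ord(f) ≥ 2 be the order of f, and suppose ⟨f, m^k·j(f)⟩ = ⟨g, m^k·j(g)⟩ for some k ≥ 2. Write f = h_1·g + H with H ∈ m^k·j(g). If h_1 is not a unit, then one obtains a contradiction; more precisely: if g = h_2·f + G with G ∈ m^k·j(f) and h_1 ∈ m, then f ∈ m^{k+s-1}, contradicting ord(f) = s and k ≥ 2. -/

import Mathlib

noncomputable section

/-- The formal power series ring `K[[x_1,...,x_n]]`. -/
abbrev PS (K : Type*) [Field K] (n : ℕ) := MvPowerSeries (Fin n) K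

/-- The maximal ideal `m` of `K[[x]]` (power series with zero constant term). -/
def mx (K : Type*) [Field K] (n : ℕ) : Ideal (PS K n) :=
  RingHom.ker (MvPowerSeries.constantCoeff : MvPowerSeries (Fin n) K →+* K)

/-- The `i`-th formal partial derivative of a power series. -/
def pd {K : Type*} [Field K] {n : ℕ} (i : Fin n) (f : PS K n) : PS K n :=
  fun e => (e i + 1 : ℕ) • MvPowerSeries.coeff (e + Finsupp.single i 1) f

/-- The Jacobian ideal `j(f) = ⟨∂f/∂x_1, ..., ∂f/∂x_n⟩`. -/
def jId {K : Type*} [Field K] {n : ℕ} (f : PS K n) : Ideal (PS K n) :=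
  Ideal.span (Set.range fun i => pd i f)

/-- The Tjurina ideal `tj(f) = ⟨f⟩ + j(f)`. -/
def tjId {K : Type*} [Field K] {n : ℕ} (f : PS K n) : Ideal (PS K n) :=
  Ideal.span {f} ⊔ jId f

/-- The ideal defining the `k`-th Tjurina algebra: `⟨f, m^k j(f)⟩`. -/
def TkId {K : Type*} [Field K] {n : ℕ} (k : ℕ) (f : PS K n) : Ideal (PS K n) :=
  Ideal.span {f} ⊔ (mx K n) ^ k * jId f

/-- The ideal defining the `k`-th Milnor algebra: `m^k j(f)`. -/
def MkId {K : Type*} [Field K] {n : ℕ} (k : ℕ) (f : PS K n) : Ideal (PS K n) :=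
  (mx K n) ^ k * jId f

/-- Contact equivalence: `g = u · φ(f)`. -/
def ContactEquiv {K : Type*} [Field K] {n : ℕ} (f g : PS K n) : Prop :=
  ∃ (φ : PS K n ≃ₐ[K] PS K n) (u : (PS K n)ˣ), g = (u : PS K n) * φ f

/-- Right equivalence: `g = φ(f)`. -/
def RightEquiv {K : Type*} [Field K] {n : ℕ} (f g : PS K n) : Prop :=
  ∃ φ : PS K n ≃ₐ[K] PS K n, g = φ f

/-- `f` is contact `N`-determined. -/
def ContactDetermined {K : Type*} [Field K] {n : ℕ} (N : ℕ) (f : PS K n) : Prop :=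
  ∀ g : PS K n, g - f ∈ (mx K n) ^ (N + 1) → ContactEquiv f g

/-- `f` is right `N`-determined. -/
def RightDetermined {K : Type*} [Field K] {n : ℕ} (N : ℕ) (f : PS K n) : Prop :=
  ∀ g : PS K n, g - f ∈ (mx K n) ^ (N + 1) → RightEquiv f g

/-!
Partial derivatives lower the `m`-adic order by at most one, so `m^k j(f) ⊆ m^(k+s-1)` whenever
`f ∈ m^s`. Hence `g = h₂ f + G ∈ m^s`, then `H ∈ m^k j(g) ⊆ m^(s+1)` as `k ≥ 2`, and
`f = h₁ g + H ∈ m^(s+1)` because `h₁ ∈ m`.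
-/

theorem Derivation.apply_mem_pow_of_mem_pow_succ {R A : Type*} [CommSemiring R] [CommSemiring A]
    [Algebra R A] (D : Derivation R A A) (I : Ideal A) {m : ℕ} {x : A} (hx : x ∈ I ^ (m + 1)) :
    D x ∈ I ^ m := by
  induction m generalizing x with
  | zero => simp
  | succ m ih =>
    rw [pow_succ'] at hx
    refine Submodule.mul_induction_on hx (fun a ha b hb => ?_) fun x y hx hy => ?_
    · rw [D.leibniz, smul_eq_mul, smul_eq_mul]
      exact add_mem (pow_succ' I m ▸ Ideal.mul_mem_mul ha (ih hb)) (Ideal.mul_mem_right _ _ hb)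
    · exact D.map_add x y ▸ add_mem hx hy

theorem pd_eq_pderiv {K : Type*} [Field K] {n : ℕ} (i : Fin n) (f : PS K n) :
    pd i f = MvPowerSeries.pderiv K i f := by
  ext e
  change (e i + 1) • MvPowerSeries.coeff (e + Finsupp.single i 1) f = _
  rw [MvPowerSeries.coeff_pderiv, nsmul_eq_mul, mul_comm]
  push_cast
  rfl

theorem jId_le_pow_pred {K : Type*} [Field K] {n s : ℕ} {f : PS K n} (hf : f ∈ mx K n ^ s) :
    jId f ≤ mx K n ^ (s - 1) := by
  rw [jId, Ideal.span_le]
  rintro _ ⟨i, rfl⟩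
  obtain _ | s := s
  · simp
  · show pd i f ∈ mx K n ^ s
    rw [pd_eq_pderiv]
    exact (MvPowerSeries.pderiv K i).apply_mem_pow_of_mem_pow_succ _ hf

theorem mul_jId_le_pow {K : Type*} [Field K] {n s k : ℕ} {f : PS K n} (hf : f ∈ mx K n ^ s) :
    mx K n ^ k * jId f ≤ mx K n ^ (k + (s - 1)) :=
  pow_add (mx K n) k (s - 1) ▸ Ideal.mul_mono_right (jId_le_pow_pred hf)

theorem stmt_6_general {K : Type*} [Field K] {n : ℕ} (f g h₁ h₂ H G : PS K n)
    (s k : ℕ) (hk : 2 ≤ k)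
    (hf : f ∈ (mx K n) ^ s) (hf' : f ∉ (mx K n) ^ (s + 1))
    (hh₁ : h₁ ∈ mx K n)
    (hH : H ∈ (mx K n) ^ k * jId g) (hG : G ∈ (mx K n) ^ k * jId f)
    (e₁ : f = h₁ * g + H) (e₂ : g = h₂ * f + G) :
    False := by
  have hG' : G ∈ mx K n ^ s :=
    Ideal.pow_le_pow_right (by omega) (mul_jId_le_pow hf hG)
  have hg : g ∈ mx K n ^ s := e₂ ▸ add_mem (Ideal.mul_mem_left _ _ hf) hG'
  have hH' : H ∈ mx K n ^ (s + 1) :=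
    Ideal.pow_le_pow_right (by omega) (mul_jId_le_pow hg hH)
  have hh₁g : h₁ * g ∈ mx K n ^ (s + 1) := pow_succ' (mx K n) s ▸ Ideal.mul_mem_mul hh₁ hg
  exact hf' (e₁ ▸ add_mem hh₁g hH')

/-- in Case 2 of the proof of the main theorem (`h₁` not a unit)
one obtains a contradiction. -/
theorem stmt_6 {K : Type*} [Field K] {n : ℕ} (f g h₁ h₂ H G : PS K n)
    (s k : ℕ) (hs : 2 ≤ s) (hk : 2 ≤ k)
    (hf : f ∈ (mx K n) ^ s) (hf' : f ∉ (mx K n) ^ (s + 1))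
    (hh₁ : h₁ ∈ mx K n)
    (hH : H ∈ (mx K n) ^ k * jId g) (hG : G ∈ (mx K n) ^ k * jId f)
    (e₁ : f = h₁ * g + H) (e₂ : g = h₂ * f + G) :
    False :=
  stmt_6_general f g h₁ h₂ H G s k hk hf hf' hh₁ hH hG e₁ e₂
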